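/- Let m ≥ 2, d ≥ 2. If T ⊆ {1,...,2^m - 1}^d satisfies condition (S) of order m, then the point set P = 2^{-m}·T ⊆ M_m^d ⊆ [0,1]^d satisfies disp(P) ≤ 2^{-m}. -/

import Mathlib

/- Write `ε = 2⁻ᵐ` and suppose a box avoiding `P` had volume `> ε`. Then every side is
longer than `ε`, and since `(1 - ε) ^ (m 2ᵐ) ≤ ε`, fewer than `m 2ᵐ` sides have length
`≤ 1 - ε`. Enlarge the set of these short sides to a set `A` of size `min (m 2ᵐ) d`.
A side longer than `ε` contains a grid point `k / 2ᵐ` with `1 ≤ k ≤ 2ᵐ - 1`, and a side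
longer than `1 - ε` contains all of them; so a point of `T` that matches such grid points
on `A`, which exists by (S), lies in the box. -/

open Finset

section Prod

variable {ι R : Type*} [CommMonoidWithZero R] [PartialOrder R] [ZeroLEOneClass R] [PosMulMono R]
  {f : ι → R} {s : Finset ι}

lemma Finset.prod_le_of_mem_of_le_one {j : ι} (hj : j ∈ s) (hf0 : ∀ i ∈ s, 0 ≤ f i)
    (hf1 : ∀ i ∈ s, f i ≤ 1) : ∏ i ∈ s, f i ≤ f j := by
  simpa using prod_le_prod_of_subset_of_le_one (singleton_subset_iff.2 hj) hf0
    fun i hi _ ↦ hf1 i hi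

lemma Finset.prod_le_pow_card_filter_le [DecidableLE R] (c : R) (hf0 : ∀ i ∈ s, 0 ≤ f i)
    (hf1 : ∀ i ∈ s, f i ≤ 1) : ∏ i ∈ s, f i ≤ c ^ #{i ∈ s | f i ≤ c} :=
  calc ∏ i ∈ s, f i ≤ ∏ i ∈ s with f i ≤ c, f i :=
        prod_le_prod_of_subset_of_le_one (filter_subset _ _) hf0 fun i hi _ ↦ hf1 i hi
    _ ≤ ∏ i ∈ s with f i ≤ c, c :=
        prod_le_prod (fun i hi ↦ hf0 i (mem_filter.1 hi).1) fun _ hi ↦ (mem_filter.1 hi).2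
    _ = c ^ #{i ∈ s | f i ≤ c} := prod_const c

end Prod

lemma one_sub_inv_pow_le_half {N : ℕ} (hN : 0 < N) : (1 - (N : ℝ)⁻¹) ^ N ≤ 1 / 2 :=
  calc (1 - (N : ℝ)⁻¹) ^ N = (1 - 1 / N) ^ N := by rw [one_div]
    _ ≤ Real.exp (-1) := Real.one_sub_div_pow_le_exp_neg (by exact_mod_cast hN)
    _ ≤ 1 / 2 := by
        rw [Real.exp_neg, one_div]
        exact inv_anti₀ two_pos Real.exp_one_gt_two.le

lemma one_sub_inv_two_pow_nonneg (m : ℕ) : 0 ≤ 1 - ((2 : ℝ) ^ m)⁻¹ :=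
  sub_nonneg.2 (inv_le_one_of_one_le₀ (one_le_pow₀ one_le_two))

lemma one_sub_inv_two_pow_pow_le (m : ℕ) :
    (1 - ((2 : ℝ) ^ m)⁻¹) ^ (m * 2 ^ m) ≤ ((2 : ℝ) ^ m)⁻¹ :=
  calc (1 - ((2 : ℝ) ^ m)⁻¹) ^ (m * 2 ^ m) = ((1 - ((2 : ℝ) ^ m)⁻¹) ^ 2 ^ m) ^ m := by
        rw [← pow_mul, mul_comm]
    _ ≤ (1 / 2) ^ m := by
        gcongr
        · exact pow_nonneg (one_sub_inv_two_pow_nonneg m) _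
        · exact_mod_cast one_sub_inv_pow_le_half (Nat.two_pow_pos m)
    _ = ((2 : ℝ) ^ m)⁻¹ := by rw [one_div, inv_pow]

lemma exists_nat_div_mem_Ioo {N : ℕ} {a b : ℝ} (hN : 0 < N) (ha : 0 ≤ a) (hb : b ≤ 1)
    (hab : (N : ℝ)⁻¹ < b - a) :
    ∃ k : ℕ, (1 ≤ k ∧ k ≤ N - 1) ∧ (k : ℝ) / N ∈ Set.Ioo a b := by
  have hN' : (0 : ℝ) < N := by exact_mod_cast hN
  have hfloor : (⌊a * N⌋₊ : ℝ) ≤ a * N := Nat.floor_le (by positivity)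
  have hlt : (⌊a * N⌋₊ + 1 : ℝ) / N < b := by
    rw [div_lt_iff₀ hN']
    rw [inv_lt_iff_one_lt_mul₀ hN'] at hab
    nlinarith
  have hltN : ((⌊a * N⌋₊ + 1 : ℕ) : ℝ) < N := by
    push_cast
    exact (div_lt_one hN').1 (hlt.trans_le hb)
  refine ⟨⌊a * N⌋₊ + 1, ⟨le_add_self, by have := Nat.cast_lt.1 hltN; omega⟩, ?_,
    by exact_mod_cast hlt⟩
  rw [lt_div_iff₀ hN']
  push_cast
  exact Nat.lt_floor_add_one _

lemma nat_div_mem_Ioo_of_one_sub_inv_lt {N k : ℕ} {a b : ℝ} (ha : 0 ≤ a) (hb : b ≤ 1)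
    (hab : 1 - (N : ℝ)⁻¹ < b - a) (hk : 1 ≤ k ∧ k ≤ N - 1) :
    (k : ℝ) / N ∈ Set.Ioo a b := by
  have hN : (1 : ℝ) ≤ N := by exact_mod_cast (by omega : 1 ≤ N)
  have hkN : (k : ℝ) + 1 ≤ N := by exact_mod_cast (by omega : k + 1 ≤ N)
  have hk1 : (1 : ℝ) ≤ k := by exact_mod_cast hk.1
  constructor
  · calc a < (N : ℝ)⁻¹ := by linarith
      _ = 1 / N := (one_div _).symm
      _ ≤ k / N := by gcongr
  · calc (k : ℝ) / N ≤ (N - 1) / N := by gcongr; linarith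
      _ = 1 - (N : ℝ)⁻¹ := by field_simp
      _ < b := by linarith

theorem stmt_11_general (m d : ℕ)
    (T : Finset (Fin d → ℕ)) (hT : ∀ x ∈ T, ∀ i, 1 ≤ x i ∧ x i ≤ 2 ^ m - 1)
    (hS : ∀ A : Finset (Fin d), A.card = min (m * 2 ^ m) d →
      ∀ z : Fin d → ℕ, (∀ i, 1 ≤ z i ∧ z i ≤ 2 ^ m - 1) →
        ∃ x ∈ T, ∀ i ∈ A, x i = z i) :
    ∀ (a b : Fin d → ℝ) (I : Fin d → Set ℝ),
      (∀ j, 0 ≤ a j ∧ a j ≤ b j ∧ b j ≤ 1) →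
      (∀ j, Set.Ioo (a j) (b j) ⊆ I j ∧ I j ⊆ Set.Icc (a j) (b j)) →
      (∀ x ∈ T.image (fun x (i : Fin d) => (x i : ℝ) / 2 ^ m), ∃ j, x j ∉ I j) →
      ∏ j, (b j - a j) ≤ ((2 : ℝ) ^ m)⁻¹ := by
  intro a b I hab hI hP
  set ε : ℝ := ((2 : ℝ) ^ m)⁻¹
  have hε : ((2 ^ m : ℕ) : ℝ)⁻¹ = ε := by push_cast; rfl
  by_contra! hvol
  have hside0 (j : Fin d) : 0 ≤ b j - a j := by linarith [hab j]
  have hside1 (j : Fin d) : b j - a j ≤ 1 := by linarith [hab j]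
  have hlong (j : Fin d) : ε < b j - a j := by
    by_contra! hj
    exact hvol.not_ge ((prod_le_of_mem_of_le_one (mem_univ j) (fun i _ ↦ hside0 i)
      (fun i _ ↦ hside1 i)).trans hj)
  set S : Finset (Fin d) := {j | b j - a j ≤ 1 - ε}
  have hS_card : #S < m * 2 ^ m := by
    by_contra! hS_card
    refine hvol.not_ge ?_
    calc ∏ j, (b j - a j) ≤ (1 - ε) ^ #S :=
          prod_le_pow_card_filter_le _ (fun i _ ↦ hside0 i) (fun i _ ↦ hside1 i)
      _ ≤ (1 - ε) ^ (m * 2 ^ m) :=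
          pow_le_pow_of_le_one (one_sub_inv_two_pow_nonneg m)
            (sub_le_self _ (by positivity)) hS_card
      _ ≤ ε := one_sub_inv_two_pow_pow_le m
  obtain ⟨A, hSA, -, hA⟩ := exists_subsuperset_card_eq (subset_univ S)
    (le_min hS_card.le (card_le_univ S)) (by simp)
  choose z hz hzI using fun j ↦
    exists_nat_div_mem_Ioo (Nat.two_pow_pos m) (hab j).1 (hab j).2.2 (hε ▸ hlong j)
  obtain ⟨x, hxT, hxz⟩ := hS A (by simpa using hA) z hz
  obtain ⟨j, hj⟩ := hP _ (mem_image_of_mem _ hxT)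
  refine hj ((hI j).1 ?_)
  by_cases hjA : j ∈ A
  · simpa [hxz j hjA] using hzI j
  · have hjS : ¬ b j - a j ≤ 1 - ε := fun h ↦ hjA (hSA (by simpa [S] using h))
    simpa using nat_div_mem_Ioo_of_one_sub_inv_lt (hab j).1 (hab j).2.2
      (hε ▸ not_le.1 hjS) (hT x hxT j)

/-- If `T ⊆ {1,…,2^m-1}^d` satisfies condition (S) of order `m` (projections onto every
index set of size `A_m = min(m·2^m, d)` attain all values in `{1,…,2^m-1}^{A_m}`), then
`P = 2^{-m}·T ⊆ [0,1]^d` has dispersion at most `2^{-m}`: every axis-parallel box in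
`[0,1]^d` disjoint from `P` has volume at most `2^{-m}`. -/
theorem stmt_11 (m d : ℕ) (hm : 2 ≤ m) (hd : 2 ≤ d)
    (T : Finset (Fin d → ℕ)) (hT : ∀ x ∈ T, ∀ i, 1 ≤ x i ∧ x i ≤ 2 ^ m - 1)
    (hS : ∀ A : Finset (Fin d), A.card = min (m * 2 ^ m) d →
      ∀ z : Fin d → ℕ, (∀ i, 1 ≤ z i ∧ z i ≤ 2 ^ m - 1) →
        ∃ x ∈ T, ∀ i ∈ A, x i = z i) :
    ∀ (a b : Fin d → ℝ) (I : Fin d → Set ℝ),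
      (∀ j, 0 ≤ a j ∧ a j ≤ b j ∧ b j ≤ 1) →
      (∀ j, Set.Ioo (a j) (b j) ⊆ I j ∧ I j ⊆ Set.Icc (a j) (b j)) →
      (∀ x ∈ T.image (fun x (i : Fin d) => (x i : ℝ) / 2 ^ m), ∃ j, x j ∉ I j) →
      ∏ j, (b j - a j) ≤ ((2 : ℝ) ^ m)⁻¹ :=
  stmt_11_general m d T hT hS
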